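/- arXiv:gr-qc/0501052 — 3 statements merged into one kernel-verified Lean document; each statement's English description precedes it below -/
import Mathlib

section
/- Let ξ : ℝ → Matrix (Fin 2) (Fin 2) ℝ be differentiable at t with det (ξ t) > 0. Define X : ℝ → ℝ by X s = (1/2) * Real.log (det (ξ s)) and σ : ℝ → Matrix (Fin 2) (Fin 2) ℝ by σ s = Real.exp (- X s) • ξ s (so that det (σ s) = 1). Then Matrix.trace ((ξ t)⁻¹ * deriv ξ t * (ξ t)⁻¹ * deriv ξ t) = 2 * (deriv X t)^2 + Matrix.trace ((σ t)⁻¹ * deriv σ t * (σ t)⁻¹ * deriv σ t). -/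
/-!
Put `B = ξ⁻¹ ξ'`. Jacobi's formula gives `(log det ξ)' = tr B`, so `X' = tr B / 2`, and the
logarithmic derivative of `σ = e^{-X} ξ` is `σ⁻¹ σ' = B - X' • 1`. Expanding
`tr ((B - X' • 1)²) = tr (B²) - 2 X' tr B + 2 X'² = tr (B²) - 2 X'²` gives the splitting.
-/

attribute [local instance] Matrix.normedAddCommGroup Matrix.normedSpace

open Matrix

theorem Matrix.hasDerivAt_det_fin_two {𝕜 : Type*} [NontriviallyNormedField 𝕜]
    {ξ : 𝕜 → Matrix (Fin 2) (Fin 2) 𝕜} {ξ' : Matrix (Fin 2) (Fin 2) 𝕜} {t : 𝕜}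
    (h : HasDerivAt ξ ξ' t) :
    HasDerivAt (fun s => (ξ s).det) (trace (adjugate (ξ t) * ξ')) t := by
  have hentry (i j : Fin 2) : HasDerivAt (fun s => ξ s i j) (ξ' i j) t :=
    hasDerivAt_pi.1 (hasDerivAt_pi.1 h i) j
  simp only [det_fin_two]
  refine (((hentry 0 0).mul (hentry 1 1)).sub ((hentry 0 1).mul (hentry 1 0))).congr_deriv ?_
  simp [adjugate_fin_two, trace_fin_two, vecMul, dotProduct, Fin.sum_univ_two]
  ring

theorem Matrix.hasDerivAt_log_det_fin_two {ξ : ℝ → Matrix (Fin 2) (Fin 2) ℝ}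
    {ξ' : Matrix (Fin 2) (Fin 2) ℝ} {t : ℝ} (h : HasDerivAt ξ ξ' t) (hdet : (ξ t).det ≠ 0) :
    HasDerivAt (fun s => Real.log (ξ s).det) (trace ((ξ t)⁻¹ * ξ')) t := by
  refine ((hasDerivAt_det_fin_two h).log hdet).congr_deriv ?_
  rw [inv_def, Ring.inverse_eq_inv', smul_mul, trace_smul, smul_eq_mul, div_eq_inv_mul]

theorem Matrix.inv_smul_mul_smul_add_smul {n K : Type*} [Fintype n] [DecidableEq n] [Field K]
    (A A' : Matrix n n K) {a : K} (a' : K) (ha : a ≠ 0) (hA : IsUnit A.det) :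
    (a • A)⁻¹ * (a • A' + a' • A) = A⁻¹ * A' + (a' / a) • 1 := by
  have := invertibleOfNonzero ha
  rw [inv_smul (A := A) a hA, invOf_eq_inv, smul_mul, Matrix.mul_add,
    Matrix.mul_smul, Matrix.mul_smul, nonsing_inv_mul A hA, smul_add, smul_smul, smul_smul,
    inv_mul_cancel₀ ha, one_smul, inv_mul_eq_div]

theorem Matrix.trace_mul_self_sub_smul_one {n R : Type*} [Fintype n] [DecidableEq n] [CommRing R]
    (B : Matrix n n R) (c : R) :
    trace ((B - c • 1) * (B - c • 1)) =
      trace (B * B) - 2 * c * trace B + Fintype.card n * c ^ 2 := by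
  simp only [sub_mul, mul_sub, smul_mul, Matrix.mul_smul, Matrix.one_mul, Matrix.mul_one,
    trace_sub, trace_smul, trace_one, smul_eq_mul]
  ring

/-- The metric `ξ^{mp} ξ^{nq} dξ_{mn} dξ_{pq}` on positive `2 × 2` matrices splits as the
product of a line (coordinate `X = (1/2) log det ξ`) and the metric on the unimodular
matrices `σ = e^{-X} ξ` (the Poincaré plane), evaluated along a curve `ξ(t)`. -/
theorem trace_sq_splitting
    (t : ℝ) (ξ : ℝ → Matrix (Fin 2) (Fin 2) ℝ)
    (hξ : DifferentiableAt ℝ ξ t) (hdet : 0 < (ξ t).det)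
    (X : ℝ → ℝ) (hX : ∀ s, X s = (1/2) * Real.log (ξ s).det)
    (σ : ℝ → Matrix (Fin 2) (Fin 2) ℝ)
    (hσ : ∀ s, σ s = Real.exp (- X s) • ξ s) :
    Matrix.trace ((ξ t)⁻¹ * deriv ξ t * (ξ t)⁻¹ * deriv ξ t) =
      2 * (deriv X t)^2 +
        Matrix.trace ((σ t)⁻¹ * deriv σ t * (σ t)⁻¹ * deriv σ t) := by
  set B := (ξ t)⁻¹ * deriv ξ t
  have hξd : HasDerivAt ξ (deriv ξ t) t := hξ.hasDerivAt
  have hXd : HasDerivAt X ((1 / 2) * trace B) t := by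
    rw [funext hX]
    exact (hasDerivAt_log_det_fin_two hξd hdet.ne').const_mul _
  have hσd : deriv σ t =
      Real.exp (-X t) • deriv ξ t + (Real.exp (-X t) * -deriv X t) • ξ t := by
    rw [funext hσ, hXd.deriv]
    exact (hXd.neg.exp.smul hξd).deriv
  have hlogσ : (σ t)⁻¹ * deriv σ t = B - deriv X t • 1 := by
    rw [hσd, hσ, inv_smul_mul_smul_add_smul _ _ _ (Real.exp_ne_zero _)
      (isUnit_iff_ne_zero.2 hdet.ne'), mul_div_cancel_left₀ _ (Real.exp_ne_zero _),
      neg_smul, ← sub_eq_add_neg]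
  rw [mul_assoc ((σ t)⁻¹ * deriv σ t), hlogσ, trace_mul_self_sub_smul_one, mul_assoc B,
    hXd.deriv]
  simp only [Fintype.card_fin, Nat.cast_ofNat]
  ring
end

section
/- Let U ⊆ EuclideanSpace ℝ (Fin 3) be open and let g : U → Matrix (Fin 3) (Fin 3) ℝ, X : U → ℝ and v : U → (Fin 3 → ℝ) be differentiable on U, with g y invertible for all y ∈ U. For a matrix field h define Div_h v (y) = |det (h y)|^{-1/2} * Σ_α ∂_α ( |det h|^{1/2} * ((h)⁻¹.mulVec v)_α ) (y), where ∂_α denotes the partial derivative in the α-th coordinate direction. Let g̲ = fun y => Real.exp (-2 * X y) • g y. Then at every point y ∈ U where all the relevant functions are differentiable: Div_{g̲} v (y) = Real.exp (2 * X y) * ( Div_g v (y) - Σ_α ((g y)⁻¹.mulVec (v y)) α * ∂_α X (y) ). -/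
attribute [local instance] Matrix.normedAddCommGroup Matrix.normedSpace

/-- Partial derivative in the `α`-th coordinate direction of `EuclideanSpace ℝ (Fin 3)`. -/
noncomputable def pderiv3 (α : Fin 3) (f : EuclideanSpace ℝ (Fin 3) → ℝ)
    (y : EuclideanSpace ℝ (Fin 3)) : ℝ :=
  fderiv ℝ f y (EuclideanSpace.single α 1)

/-- Divergence, with respect to the metric given by the matrix field `h`, of the vector field
obtained from the covector field `v` by raising the index with `h`:
`|det h|^{-1/2} ∂_α(|det h|^{1/2} (h⁻¹ v)^α)`. -/
noncomputable def metricDiv (h : EuclideanSpace ℝ (Fin 3) → Matrix (Fin 3) (Fin 3) ℝ)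
    (v : EuclideanSpace ℝ (Fin 3) → (Fin 3 → ℝ)) (y : EuclideanSpace ℝ (Fin 3)) : ℝ :=
  |(h y).det| ^ (-(1/2) : ℝ) *
    ∑ α : Fin 3, pderiv3 α (fun z => |(h z).det| ^ ((1/2) : ℝ) * ((h z)⁻¹.mulVec (v z)) α) y

private lemma exp_rpow' (t r : ℝ) : Real.exp t ^ r = Real.exp (r * t) := by
  rw [Real.rpow_def_of_pos (Real.exp_pos t), Real.log_exp, mul_comm]

private lemma det3_diffAt (M : EuclideanSpace ℝ (Fin 3) → Matrix (Fin 3) (Fin 3) ℝ)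
    (y : EuclideanSpace ℝ (Fin 3))
    (hM : ∀ i j, DifferentiableAt ℝ (fun z => M z i j) y) :
    DifferentiableAt ℝ (fun z => (M z).det) y := by
  simp only [Matrix.det_apply', Fin.prod_univ_three]
  exact DifferentiableAt.fun_sum fun σ _ =>
    (((hM _ _).mul (hM _ _)).mul (hM _ _)).const_mul _

private lemma smul_inv3 (c : ℝ) (hc : c ≠ 0) (A : Matrix (Fin 3) (Fin 3) ℝ) :
    (c • A)⁻¹ = c⁻¹ • A⁻¹ := by
  rw [Matrix.inv_def, Matrix.inv_def, Matrix.det_smul, Matrix.adjugate_smul,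
    smul_smul, smul_smul, Ring.inverse_eq_inv']
  congr 1
  rw [Fintype.card_fin, mul_inv, ← inv_pow]
  have hcc : c ^ 2 * c⁻¹ ^ 3 = c⁻¹ := by field_simp
  calc c⁻¹ ^ 3 * A.det⁻¹ * c ^ (3 - 1) = (c ^ 2 * c⁻¹ ^ 3) * A.det⁻¹ := by norm_num; ring
    _ = c⁻¹ * A.det⁻¹ := by rw [hcc]

private lemma absdet_smul3 (c : ℝ) (hc : 0 < c) (A : Matrix (Fin 3) (Fin 3) ℝ) (r : ℝ) :
    |((c • A).det)| ^ r = (c ^ (3:ℕ)) ^ r * |A.det| ^ r := by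
  rw [Matrix.det_smul, Fintype.card_fin, abs_mul, abs_pow, abs_of_pos hc,
    Real.mul_rpow (by positivity) (abs_nonneg _)]

private lemma inner_eq (g : EuclideanSpace ℝ (Fin 3) → Matrix (Fin 3) (Fin 3) ℝ)
    (X : EuclideanSpace ℝ (Fin 3) → ℝ) (v : EuclideanSpace ℝ (Fin 3) → (Fin 3 → ℝ))
    (α : Fin 3) :
    (fun z => |(Real.exp (-2 * X z) • g z).det| ^ ((1/2) : ℝ) *
        ((Real.exp (-2 * X z) • g z)⁻¹.mulVec (v z)) α)
      = fun z => Real.exp (-(X z)) *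
        (|(g z).det| ^ ((1/2) : ℝ) * ((g z)⁻¹.mulVec (v z)) α) := by
  funext z
  rw [absdet_smul3 _ (Real.exp_pos _), smul_inv3 _ (Real.exp_ne_zero _),
    Matrix.smul_mulVec]
  rw [← Real.exp_nat_mul, exp_rpow', Pi.smul_apply, smul_eq_mul, ← Real.exp_neg]
  have h2 : ∀ a q b w : ℝ, a * q * (b * w) = a * b * (q * w) := by intros; ring
  rw [h2, ← Real.exp_add]
  norm_num
  exact Or.inl (by ring)

/-- Identity 4.2: for the conformal metric `g̲ = e^{-2X} g` on a 3-dimensional manifold,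
the divergences of a covector field `v` are linked by
`∇̲_α v̲^α = e^{2X} (∇_α v^α − v^α ∂_α X)`. -/
theorem conformal_divergence_identity
    (U : Set (EuclideanSpace ℝ (Fin 3))) (hU : IsOpen U)
    (g : EuclideanSpace ℝ (Fin 3) → Matrix (Fin 3) (Fin 3) ℝ)
    (X : EuclideanSpace ℝ (Fin 3) → ℝ)
    (v : EuclideanSpace ℝ (Fin 3) → (Fin 3 → ℝ))
    (hg : DifferentiableOn ℝ g U) (hX : DifferentiableOn ℝ X U)
    (hv : DifferentiableOn ℝ v U)
    (hinv : ∀ y ∈ U, IsUnit (g y)) :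
    ∀ y ∈ U,
      metricDiv (fun z => Real.exp (-2 * X z) • g z) v y =
        Real.exp (2 * X y) *
          (metricDiv g v y - ∑ α : Fin 3, ((g y)⁻¹.mulVec (v y)) α * pderiv3 α X y) := by
  intro y hy
  have hmem : U ∈ nhds y := hU.mem_nhds hy
  have hgy : DifferentiableAt ℝ g y := (hg y hy).differentiableAt hmem
  have hXy : DifferentiableAt ℝ X y := (hX y hy).differentiableAt hmem
  have hvy : DifferentiableAt ℝ v y := (hv y hy).differentiableAt hmem
  have hdy : (g y).det ≠ 0 :=
    isUnit_iff_ne_zero.mp ((Matrix.isUnit_iff_isUnit_det _).mp (hinv y hy))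
  have hgE : ∀ i j, DifferentiableAt ℝ (fun z => g z i j) y := fun i j =>
    (differentiableAt_pi.mp ((differentiableAt_pi.mp hgy) i)) j
  have hd : DifferentiableAt ℝ (fun z => (g z).det) y := det3_diffAt g y hgE
  have hadj : ∀ i j, DifferentiableAt ℝ (fun z => (g z).adjugate i j) y := by
    intro i j
    simp only [Matrix.adjugate_apply]
    apply det3_diffAt
    intro k l
    simp only [Matrix.updateRow_apply]
    by_cases h : k = j <;> simp [h, hgE k l]
  have hW : ∀ α, DifferentiableAt ℝ (fun z => ((g z)⁻¹.mulVec (v z)) α) y := by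
    intro α
    have hvE : ∀ j, DifferentiableAt ℝ (fun z => v z j) y := fun j =>
      (differentiableAt_pi.mp hvy) j
    have hne : ∀ᶠ z in nhds y, (g z).det ≠ 0 := hd.continuousAt.eventually_ne hdy
    have heq : (fun z => ((g z)⁻¹.mulVec (v z)) α) =ᶠ[nhds y]
        (fun z => ∑ j, (((g z).det)⁻¹ * (g z).adjugate α j) * v z j) := by
      filter_upwards [hne] with z hz
      rw [Matrix.inv_def, Ring.inverse_eq_inv']
      simp [Matrix.mulVec, dotProduct, Finset.mul_sum, mul_assoc]
    exact DifferentiableAt.congr_of_eventuallyEq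
      (DifferentiableAt.fun_sum fun j _ => ((hd.inv hdy).mul (hadj α j)).mul (hvE j)) heq
  have hQ : DifferentiableAt ℝ (fun z => |(g z).det| ^ ((1/2) : ℝ)) y :=
    (hd.abs hdy).rpow_const (Or.inl (abs_ne_zero.mpr hdy))
  have hE : DifferentiableAt ℝ (fun z => Real.exp (-(X z))) y := hXy.neg.exp
  have hF : ∀ α, DifferentiableAt ℝ
      (fun z => |(g z).det| ^ ((1/2) : ℝ) * ((g z)⁻¹.mulVec (v z)) α) y :=
    fun α => hQ.mul (hW α)
  have key : ∀ α : Fin 3,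
      pderiv3 α (fun z => |(Real.exp (-2 * X z) • g z).det| ^ ((1/2) : ℝ) *
        ((Real.exp (-2 * X z) • g z)⁻¹.mulVec (v z)) α) y
      = Real.exp (-(X y)) * pderiv3 α (fun z => |(g z).det| ^ ((1/2) : ℝ) *
          ((g z)⁻¹.mulVec (v z)) α) y
        - (Real.exp (-(X y)) * |(g y).det| ^ ((1/2) : ℝ)) *
            (((g y)⁻¹.mulVec (v y)) α * pderiv3 α X y) := by
    intro α
    rw [inner_eq g X v α]
    unfold pderiv3
    rw [fderiv_fun_mul hE (hF α)]
    have hfe : fderiv ℝ (fun z => Real.exp (-(X z))) y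
        = Real.exp (-(X y)) • (-(fderiv ℝ X y)) := by
      rw [fderiv_exp (f := fun z => -X z) hXy.neg, fderiv_fun_neg]
    rw [hfe]
    simp only [ContinuousLinearMap.add_apply, ContinuousLinearMap.smul_apply,
      ContinuousLinearMap.neg_apply, smul_eq_mul]
    ring
  simp only [metricDiv]
  rw [Finset.sum_congr rfl (fun α _ => key α)]
  rw [absdet_smul3 _ (Real.exp_pos _), ← Real.exp_nat_mul, exp_rpow']
  rw [Finset.sum_sub_distrib, ← Finset.mul_sum, ← Finset.mul_sum]
  have e1 : Real.exp (-(1/2) * (((3:ℕ):ℝ) * (-2 * X y))) * Real.exp (-(X y))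
      = Real.exp (2 * X y) := by
    rw [← Real.exp_add, Real.exp_eq_exp]
    push_cast
    ring
  have hone : |(g y).det| ^ (-(1/2) : ℝ) * |(g y).det| ^ ((1/2) : ℝ) = 1 := by
    rw [← Real.rpow_add (abs_pos.mpr hdy)]
    norm_num
  have halg : ∀ (a b c P Q S1 S2 : ℝ), a * b = c → P * Q = 1 →
      a * P * (b * S1 - b * Q * S2) = c * (P * S1 - S2) := by
    intro a b c P Q S1 S2 h1 h2
    calc a * P * (b * S1 - b * Q * S2)
        = (a * b) * (P * S1) - (a * b) * (P * Q) * S2 := by ring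
      _ = c * (P * S1) - c * (P * Q) * S2 := by rw [h1]
      _ = c * (P * S1 - S2) := by rw [h2]; ring
  exact halg _ _ _ _ _ _ _ e1 hone
end

section
/- Let k > 0, C ≥ 0 and t₀ > 0. Then there exist η > 0 and M₁ ≥ 1 such that the following holds: if y : ℝ → ℝ is differentiable on [t₀, ∞), satisfies y t ≥ 0 for all t ≥ t₀, satisfies y t₀ ≤ η, and satisfies the differential inequality deriv y t ≤ - (k / t) * y t + (C / t) * (y t) ^ (3/2 : ℝ) for all t ≥ t₀, then y t ≤ M₁ * (t₀ / t) ^ k * y t₀ for all t ≥ t₀. -/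
open Real Set Filter Topology

/-- Barrier function `ψ(t) = a t₀^k t^{-k} exp(λ (t₀^{-k/2} - t^{-k/2}))` with
`λ = log 2 · t₀^{k/2}`. -/
noncomputable def psiAux (k t₀ a t : ℝ) : ℝ :=
  a * t₀ ^ k * (t ^ (-k) *
    Real.exp (Real.log 2 * t₀ ^ (k/2) * (t₀ ^ (-(k/2)) - t ^ (-(k/2)))))

lemma psiAux_pos {k t₀ a t : ℝ} (ha : 0 < a) (ht₀ : 0 < t₀) (ht : 0 < t) :
    0 < psiAux k t₀ a t := by
  unfold psiAux
  positivity

lemma psiAux_t₀ {k t₀ a : ℝ} (ht₀ : 0 < t₀) : psiAux k t₀ a t₀ = a := by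
  have h1 : t₀ ^ k * t₀ ^ (-k) = 1 := by
    rw [← Real.rpow_add ht₀]; simp
  unfold psiAux
  rw [sub_self, mul_zero, Real.exp_zero, mul_one, mul_assoc, h1, mul_one]

lemma psiAux_le {k t₀ a t : ℝ} (ht₀ : 0 < t₀) (ha : 0 ≤ a) (ht : 0 < t) :
    psiAux k t₀ a t ≤ 2 * (a * (t₀ ^ k * t ^ (-k))) := by
  have hlam : (0:ℝ) ≤ Real.log 2 * t₀ ^ (k/2) := by
    have := Real.log_pos one_lt_two
    positivity
  have hg : (0:ℝ) ≤ t ^ (-(k/2)) := Real.rpow_nonneg ht.le _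
  have harg : Real.log 2 * t₀ ^ (k/2) * (t₀ ^ (-(k/2)) - t ^ (-(k/2))) ≤ Real.log 2 := by
    have h1 : Real.log 2 * t₀ ^ (k/2) * (t₀ ^ (-(k/2)) - t ^ (-(k/2)))
        ≤ Real.log 2 * t₀ ^ (k/2) * t₀ ^ (-(k/2)) := by
      apply mul_le_mul_of_nonneg_left _ hlam
      linarith
    have h2 : Real.log 2 * t₀ ^ (k/2) * t₀ ^ (-(k/2)) = Real.log 2 := by
      rw [mul_assoc, ← Real.rpow_add ht₀]
      simp
    linarith
  have hE : Real.exp (Real.log 2 * t₀ ^ (k/2) * (t₀ ^ (-(k/2)) - t ^ (-(k/2)))) ≤ 2 := by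
    calc Real.exp (Real.log 2 * t₀ ^ (k/2) * (t₀ ^ (-(k/2)) - t ^ (-(k/2))))
        ≤ Real.exp (Real.log 2) := Real.exp_le_exp.mpr harg
      _ = 2 := Real.exp_log two_pos
  unfold psiAux
  calc a * t₀ ^ k * (t ^ (-k) *
        Real.exp (Real.log 2 * t₀ ^ (k/2) * (t₀ ^ (-(k/2)) - t ^ (-(k/2)))))
      ≤ a * t₀ ^ k * (t ^ (-k) * 2) := by
        apply mul_le_mul_of_nonneg_left _ (by positivity)
        exact mul_le_mul_of_nonneg_left hE (Real.rpow_nonneg ht.le _)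
    _ = 2 * (a * (t₀ ^ k * t ^ (-k))) := by ring

lemma psiAux_hasDeriv {k t₀ a t : ℝ} (ht : 0 < t) :
    HasDerivAt (psiAux k t₀ a)
      (psiAux k t₀ a t * (Real.log 2 * t₀ ^ (k/2) * (k/2) * t ^ (-(k/2) - 1))
        - (k / t) * psiAux k t₀ a t) t := by
  have hf : HasDerivAt (fun s : ℝ => s ^ (-k)) (-k * t ^ (-k - 1)) t :=
    Real.hasDerivAt_rpow_const (Or.inl ht.ne')
  have hg : HasDerivAt (fun s : ℝ => s ^ (-(k/2))) (-(k/2) * t ^ (-(k/2) - 1)) t :=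
    Real.hasDerivAt_rpow_const (Or.inl ht.ne')
  have hinner : HasDerivAt
      (fun s : ℝ => Real.log 2 * t₀ ^ (k/2) * (t₀ ^ (-(k/2)) - s ^ (-(k/2))))
      (Real.log 2 * t₀ ^ (k/2) * (-(-(k/2) * t ^ (-(k/2) - 1)))) t :=
    (hg.const_sub _).const_mul _
  have hE := hinner.exp
  have hfe := hf.mul hE
  have h := hfe.const_mul (a * t₀ ^ k)
  refine h.congr_deriv ?_
  have h1 : t ^ (-k - 1) = t ^ (-k) / t := by
    rw [Real.rpow_sub ht, Real.rpow_one]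
  unfold psiAux
  rw [h1]
  field_simp
  ring

lemma psiAux_cont {k t₀ a : ℝ} (ht₀ : 0 < t₀) :
    ContinuousOn (psiAux k t₀ a) (Set.Ici t₀) := by
  intro x hx
  have hxpos : 0 < x := lt_of_lt_of_le ht₀ hx
  exact (psiAux_hasDeriv (k := k) (t₀ := t₀) (a := a) hxpos).continuousAt.continuousWithinAt

/-- Key strict inequality for the barrier. -/
lemma psiAux_key {k C t₀ a t : ℝ} (hk : 0 < k) (hC : 0 ≤ C) (ht₀ : 0 < t₀) (ha : 0 < a)
    (hsmall : 2 * C ^ 2 * a < k ^ 2 * Real.log 2 ^ 2 / 4) (ht : t₀ ≤ t) :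
    (C / t) * (psiAux k t₀ a t) ^ (3/2 : ℝ)
      < psiAux k t₀ a t * (Real.log 2 * t₀ ^ (k/2) * (k/2) * t ^ (-(k/2) - 1)) := by
  have htpos : 0 < t := lt_of_lt_of_le ht₀ ht
  have hlog : 0 < Real.log 2 := Real.log_pos one_lt_two
  set P := psiAux k t₀ a t with hPdef
  have hP : 0 < P := psiAux_pos ha ht₀ htpos
  have h32 : P ^ (3/2 : ℝ) = P * Real.sqrt P := by
    rw [show (3/2 : ℝ) = 1 + 1/2 by norm_num, Real.rpow_add hP, Real.rpow_one,
      Real.sqrt_eq_rpow]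
  have hX : (0:ℝ) < t₀ ^ k := Real.rpow_pos_of_pos ht₀ _
  have hT : (0:ℝ) < t ^ (-k) := Real.rpow_pos_of_pos htpos _
  have hψle : P ≤ 2 * (a * (t₀ ^ k * t ^ (-k))) := psiAux_le ht₀ ha.le htpos
  -- core: C * sqrt P < log2 * t₀^{k/2} * (k/2) * t^{-k/2}
  set R := Real.log 2 * t₀ ^ (k/2) * (k/2) * t ^ (-(k/2)) with hRdef
  have hR : 0 < R := by
    have := Real.rpow_pos_of_pos ht₀ (k/2)
    have := Real.rpow_pos_of_pos htpos (-(k/2))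
    positivity
  have hcore : C * Real.sqrt P < R := by
    have hTT : t ^ (-(k/2)) * t ^ (-(k/2)) = t ^ (-k) := by
      rw [← Real.rpow_add htpos, show -(k/2) + -(k/2) = -k by ring]
    have hXX : t₀ ^ (k/2) * t₀ ^ (k/2) = t₀ ^ k := by
      rw [← Real.rpow_add ht₀, show k/2 + k/2 = k by ring]
    have hsq : (C * Real.sqrt P) ^ 2 < R ^ 2 := by
      have e1 : (C * Real.sqrt P) ^ 2 = C ^ 2 * P := by
        rw [mul_pow, Real.sq_sqrt hP.le]
      have e2 : R ^ 2 = Real.log 2 ^ 2 * t₀ ^ k * ((k/2) ^ 2 * t ^ (-k)) := by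
        calc R ^ 2 = Real.log 2 ^ 2 * (t₀ ^ (k/2) * t₀ ^ (k/2)) *
              ((k/2) ^ 2 * (t ^ (-(k/2)) * t ^ (-(k/2)))) := by ring
          _ = _ := by rw [hTT, hXX]
      rw [e1, e2]
      nlinarith [mul_le_mul_of_nonneg_left hψle (sq_nonneg C),
        mul_pos hX hT, mul_lt_mul_of_pos_right hsmall (mul_pos hX hT)]
    exact lt_of_pow_lt_pow_left₀ 2 hR.le hsq
  have hsplit : t ^ (-(k/2) - 1) = t ^ (-(k/2)) / t := by
    rw [Real.rpow_sub htpos, Real.rpow_one]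
  rw [h32, hsplit]
  have hfinal : (C / t) * Real.sqrt P < Real.log 2 * t₀ ^ (k/2) * (k/2) * (t ^ (-(k/2)) / t) := by
    have h2 : (C / t) * Real.sqrt P = (C * Real.sqrt P) / t := by ring
    have h3 : Real.log 2 * t₀ ^ (k/2) * (k/2) * (t ^ (-(k/2)) / t) = R / t := by
      rw [hRdef]; ring
    rw [h2, h3]
    exact (div_lt_div_iff_of_pos_right htpos).mpr hcore
  calc (C / t) * (P * Real.sqrt P) = P * ((C / t) * Real.sqrt P) := by ring
    _ < P * (Real.log 2 * t₀ ^ (k/2) * (k/2) * (t ^ (-(k/2)) / t)) :=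
        mul_lt_mul_of_pos_left hfinal hP

/-- Barrier comparison: a solution starting strictly below `a` stays strictly below `ψ`. -/
lemma barrier_bound {k C t₀ a : ℝ} (hk : 0 < k) (hC : 0 ≤ C) (ht₀ : 0 < t₀) (ha : 0 < a)
    (hsmall : 2 * C ^ 2 * a < k ^ 2 * Real.log 2 ^ 2 / 4)
    (y : ℝ → ℝ) (hdiff : DifferentiableOn ℝ y (Set.Ici t₀))
    (hy0 : y t₀ < a)
    (hineq : ∀ t ≥ t₀, deriv y t ≤ -(k / t) * y t + (C / t) * (y t) ^ (3/2 : ℝ)) :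
    ∀ t ≥ t₀, y t < psiAux k t₀ a t := by
  intro t₁ ht₁
  by_contra hcon
  push_neg at hcon
  set ψ : ℝ → ℝ := psiAux k t₀ a with hψdef
  set S : Set ℝ := Set.Icc t₀ t₁ ∩ {s | ψ s ≤ y s} with hS
  have hSne : t₁ ∈ S := ⟨⟨ht₁, le_refl _⟩, hcon⟩
  have hyc : ContinuousOn y (Set.Icc t₀ t₁) :=
    hdiff.continuousOn.mono Set.Icc_subset_Ici_self
  have hψc : ContinuousOn ψ (Set.Icc t₀ t₁) :=
    (psiAux_cont ht₀).mono Set.Icc_subset_Ici_self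
  have hclosed : IsClosed S := by
    have hSeq : S = Set.Icc t₀ t₁ ∩ (fun s => y s - ψ s) ⁻¹' Set.Ici 0 := by
      ext x
      simp [hS, sub_nonneg]
    rw [hSeq]
    exact ContinuousOn.preimage_isClosed_of_isClosed (hyc.sub hψc) isClosed_Icc isClosed_Ici
  have hbdd : BddBelow S := ⟨t₀, fun x hx => hx.1.1⟩
  set ts : ℝ := sInf S with hts
  have hmem : ts ∈ S := hclosed.csInf_mem ⟨t₁, hSne⟩ hbdd
  have ht0s : t₀ ≤ ts := hmem.1.1
  have hψt₀ : ψ t₀ = a := psiAux_t₀ ht₀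
  have hlt : t₀ < ts := by
    rcases eq_or_lt_of_le ht0s with h | h
    · exfalso
      have h2 : ψ ts ≤ y ts := hmem.2
      rw [← h, hψt₀] at h2
      linarith
    · exact h
  have htspos : 0 < ts := lt_trans ht₀ hlt
  have hbefore : ∀ s, t₀ ≤ s → s < ts → y s < ψ s := by
    intro s hs1 hs2
    by_contra h
    push_neg at h
    have hsS : s ∈ S := ⟨⟨hs1, le_trans hs2.le hmem.1.2⟩, h⟩
    exact absurd (csInf_le hbdd hsS) (not_le.mpr hs2)
  have hmemn : Set.Ici t₀ ∈ 𝓝 ts := Ici_mem_nhds hlt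
  have hyda : DifferentiableAt ℝ y ts := hdiff.differentiableAt hmemn
  have hψd : HasDerivAt ψ
      (ψ ts * (Real.log 2 * t₀ ^ (k/2) * (k/2) * ts ^ (-(k/2) - 1)) - (k / ts) * ψ ts) ts :=
    psiAux_hasDeriv htspos
  have hIoo : Set.Ioo t₀ ts ∈ 𝓝[<] ts :=
    Ioo_mem_nhdsLT_of_mem ⟨hlt, le_refl _⟩
  have heq : y ts = ψ ts := by
    refine le_antisymm ?_ hmem.2
    have hcont : Filter.Tendsto (fun s => y s - ψ s) (𝓝[<] ts) (𝓝 (y ts - ψ ts)) :=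
      ((hyda.continuousAt.sub hψd.continuousAt).tendsto).mono_left nhdsWithin_le_nhds
    have hev : ∀ᶠ s in 𝓝[<] ts, y s - ψ s ≤ 0 := by
      filter_upwards [hIoo] with s hs
      have := hbefore s hs.1.le hs.2
      linarith
    have := le_of_tendsto hcont hev
    linarith
  -- derivative of y - ψ at ts is nonnegative (left first-crossing)
  have hF : HasDerivAt (fun s => y s - ψ s)
      (deriv y ts - (ψ ts * (Real.log 2 * t₀ ^ (k/2) * (k/2) * ts ^ (-(k/2) - 1))
        - (k / ts) * ψ ts)) ts := hyda.hasDerivAt.sub hψd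
  have hslope := hasDerivAt_iff_tendsto_slope.mp hF
  have hslope' : Filter.Tendsto (slope (fun s => y s - ψ s) ts) (𝓝[<] ts)
      (𝓝 (deriv y ts - (ψ ts * (Real.log 2 * t₀ ^ (k/2) * (k/2) * ts ^ (-(k/2) - 1))
        - (k / ts) * ψ ts))) := by
    refine hslope.mono_left (nhdsWithin_mono _ ?_)
    intro x hx
    exact ne_of_lt hx
  have hge : 0 ≤ deriv y ts - (ψ ts * (Real.log 2 * t₀ ^ (k/2) * (k/2) * ts ^ (-(k/2) - 1))
      - (k / ts) * ψ ts) := by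
    refine ge_of_tendsto hslope' ?_
    filter_upwards [hIoo] with s hs
    have h1 : y s - ψ s < 0 := by
      have := hbefore s hs.1.le hs.2
      linarith
    have h2 : s - ts < 0 := by linarith [hs.2]
    have h3 : (0:ℝ) < (y s - ψ s - (y ts - ψ ts)) / (s - ts) := by
      rw [heq, sub_self, sub_zero]
      exact div_pos_of_neg_of_neg h1 h2
    have h4 : slope (fun s => y s - ψ s) ts s
        = (y s - ψ s - (y ts - ψ ts)) / (s - ts) := by
      rw [slope_def_field]
    rw [h4]
    exact h3.le
  have h1 := hineq ts ht0s
  rw [heq] at h1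
  have h2 := psiAux_key hk hC ht₀ ha hsmall ht0s
  rw [← hψdef] at h2
  linarith

/-- Energy decay estimate (equation 12.6): any small nonnegative solution of the
differential inequality `y' ≤ -(k/t) y + (C/t) y^{3/2}` on `[t₀, ∞)` decays like `t^{-k}`. -/
theorem energy_decay_estimate
    (k C t₀ : ℝ) (hk : 0 < k) (hC : 0 ≤ C) (ht₀ : 0 < t₀) :
    ∃ η > (0 : ℝ), ∃ M₁ ≥ (1 : ℝ), ∀ y : ℝ → ℝ,
      DifferentiableOn ℝ y (Set.Ici t₀) →
      (∀ t ≥ t₀, 0 ≤ y t) →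
      y t₀ ≤ η →
      (∀ t ≥ t₀, deriv y t ≤ -(k / t) * y t + (C / t) * (y t) ^ (3/2 : ℝ)) →
      ∀ t ≥ t₀, y t ≤ M₁ * (t₀ / t) ^ k * y t₀ := by
  have hlog : 0 < Real.log 2 := Real.log_pos one_lt_two
  have hQ : 0 < (k * Real.log 2) ^ 2 := by positivity
  set η : ℝ := min 1 ((k * Real.log 2) ^ 2 / (32 * C ^ 2 + 1)) with hη
  have hηpos : 0 < η := lt_min one_pos (by positivity)
  refine ⟨η, hηpos, 2, one_le_two, ?_⟩
  intro y hdiff hpos hsm hineq t ht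
  have htpos : 0 < t := lt_of_lt_of_le ht₀ ht
  have hy₀ : 0 ≤ y t₀ := hpos t₀ (le_refl _)
  have hone : (t₀ / t) ^ k ≤ 1 :=
    Real.rpow_le_one (by positivity) ((div_le_one htpos).mpr ht) hk.le
  have hP0 : (0:ℝ) ≤ (t₀ / t) ^ k := Real.rpow_nonneg (by positivity) _
  have hdivk : (t₀ / t) ^ k = t₀ ^ k * t ^ (-k) := by
    rw [Real.div_rpow ht₀.le htpos.le, Real.rpow_neg htpos.le, div_eq_mul_inv]
  apply le_of_forall_pos_le_add
  intro ε hε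
  set δ : ℝ := min η (ε / 2) with hδ
  have hδ0 : 0 < δ := lt_min hηpos (by positivity)
  have hδη : δ ≤ η := min_le_left _ _
  have hδε : δ ≤ ε / 2 := min_le_right _ _
  set a : ℝ := y t₀ + δ with hadef
  have ha : 0 < a := by positivity
  have haη : a ≤ 2 * η := by
    have := hsm
    simp only [hadef]
    linarith
  have hsmall : 2 * C ^ 2 * a < k ^ 2 * Real.log 2 ^ 2 / 4 := by
    have hden : (0:ℝ) < 32 * C ^ 2 + 1 := by positivity
    have hη2 : η ≤ (k * Real.log 2) ^ 2 / (32 * C ^ 2 + 1) := min_le_right _ _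
    have h5 : η * (32 * C ^ 2 + 1) ≤ (k * Real.log 2) ^ 2 :=
      (le_div_iff₀ hden).mp hη2
    nlinarith [mul_le_mul_of_nonneg_left h5 (sq_nonneg C), sq_nonneg C,
      mul_le_mul_of_nonneg_left haη (sq_nonneg C), hηpos, hQ,
      mul_nonneg (sq_nonneg C) hηpos.le]
  have hbar := barrier_bound hk hC ht₀ ha hsmall y hdiff (by linarith) hineq t ht
  have hble : psiAux k t₀ a t ≤ 2 * (a * (t₀ ^ k * t ^ (-k))) :=
    psiAux_le ht₀ ha.le htpos
  rw [← hdivk] at hble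
  have hPδ : (t₀ / t) ^ k * δ ≤ δ := by
    calc (t₀ / t) ^ k * δ ≤ 1 * δ := mul_le_mul_of_nonneg_right hone hδ0.le
      _ = δ := one_mul δ
  refine le_of_lt ?_
  calc y t < psiAux k t₀ a t := hbar
    _ ≤ 2 * (a * (t₀ / t) ^ k) := by linarith [hble]
    _ = 2 * (t₀ / t) ^ k * y t₀ + 2 * ((t₀ / t) ^ k * δ) := by
        simp only [hadef]; ring
    _ ≤ 2 * (t₀ / t) ^ k * y t₀ + ε := by linarith
end
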